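/- In the sphere braid group B₆(S²), the 20-entry factorization ((x₁)²·((x₂)_{x₁})²·((x₃)_{x₂x₁})²·((x₄)_{x₃x₂x₁})²·((x₅)_{x₄x₃x₂x₁})²)² (where (τ)² means the entry τ repeated twice, and the outer square means the 10-entry list repeated twice) is Hurwitz equivalent to the factorization (x₁·x₂·x₃·x₄·x₅·x₅·x₄·x₃·x₂·x₁)². -/
import Mathlib


/-- A single Hurwitz move: replace two consecutive entries `(x, y)` by `(x y x⁻¹, x)`. -/
def HurwitzMove {G : Type*} [Group G] (F F' : List G) : Prop :=
  ∃ (l₁ l₂ : List G) (x y : G),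
    F = l₁ ++ x :: y :: l₂ ∧ F' = l₁ ++ (x * y * x⁻¹) :: x :: l₂

/-- Hurwitz equivalence: the reflexive-symmetric-transitive closure of Hurwitz moves.
(The symmetric closure accounts for the inverse move `(x, y) ↦ (y, y⁻¹ x y)`.) -/
def HurwitzEquiv {G : Type*} [Group G] : List G → List G → Prop :=
  Relation.EqvGen HurwitzMove

/-- `n`-fold concatenation of a factorization with itself. -/
def fpow {G : Type*} (F : List G) (n : ℕ) : List G :=
  (List.replicate n F).flatten

/-- Simultaneous conjugation of all entries of a factorization by `φ`: `τ ↦ φ⁻¹ τ φ`. -/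
def fconj {G : Type*} [Group G] (F : List G) (φ : G) : List G :=
  F.map fun τ => φ⁻¹ * τ * φ

/-- Generators of the free group on five letters. -/
abbrev fg (i : Fin 5) : FreeGroup (Fin 5) := FreeGroup.of i

/-- The word `x₁x₂x₃x₄x₅²x₄x₃x₂x₁` in the free group. -/
def sphereWord : FreeGroup (Fin 5) :=
  fg 0 * fg 1 * fg 2 * fg 3 * fg 4 * fg 4 * fg 3 * fg 2 * fg 1 * fg 0

/-- Relations for the presentation of the sphere braid group `B₆(S²)`:
commutations `xᵢxⱼ = xⱼxᵢ` for `|i - j| ≥ 2`, braid relations `xᵢxᵢ₊₁xᵢ = xᵢ₊₁xᵢxᵢ₊₁`,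
and `x₁x₂x₃x₄x₅²x₄x₃x₂x₁ = 1`. -/
def braidRels : Set (FreeGroup (Fin 5)) :=
  { r | (∃ i j : Fin 5, (i : ℕ) + 2 ≤ (j : ℕ) ∧ r = fg i * fg j * (fg i)⁻¹ * (fg j)⁻¹) ∨
        (∃ i : Fin 4, r = fg i.castSucc * fg i.succ * fg i.castSucc *
          (fg i.succ * fg i.castSucc * fg i.succ)⁻¹) ∨
        r = sphereWord }

/-- The braid group of the sphere on 6 strands, via its standard presentation. -/
abbrev SphereBraid₆ : Type := PresentedGroup braidRels

/-- The half-twist generators `x₁, …, x₅` (indexed by `Fin 5`, so `x 0 = x₁`, …). -/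
def x (i : Fin 5) : SphereBraid₆ := PresentedGroup.of i

/-- Conjugation `(τ)_φ = φ⁻¹ τ φ`. -/
def bconj (τ φ : SphereBraid₆) : SphereBraid₆ := φ⁻¹ * τ * φ

section Aux
variable {G : Type*} [Group G]

lemma he_refl (F : List G) : HurwitzEquiv F F := Relation.EqvGen.refl F

lemma he_trans {F F' F'' : List G} (h : HurwitzEquiv F F') (h' : HurwitzEquiv F' F'') :
    HurwitzEquiv F F'' := Relation.EqvGen.trans _ _ _ h h'

lemma he_of_move {F F' : List G} (h : HurwitzMove F F') : HurwitzEquiv F F' :=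
  Relation.EqvGen.rel _ _ h

lemma hm_append {F F' : List G} (L R : List G) (h : HurwitzMove F F') :
    HurwitzMove (L ++ F ++ R) (L ++ F' ++ R) := by
  obtain ⟨l₁, l₂, a, b, h1, h2⟩ := h
  exact ⟨L ++ l₁, l₂ ++ R, a, b, by simp [h1], by simp [h2]⟩

lemma he_append_both {F F' : List G} (L R : List G) (h : HurwitzEquiv F F') :
    HurwitzEquiv (L ++ F ++ R) (L ++ F' ++ R) := by
  induction h with
  | rel _ _ h => exact he_of_move (hm_append L R h)
  | refl _ => exact he_refl _
  | symm _ _ _ ih => exact Relation.EqvGen.symm _ _ ih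
  | trans _ _ _ _ _ ih1 ih2 => exact he_trans ih1 ih2

lemma he_append {F F' E E' : List G} (h : HurwitzEquiv F F') (h' : HurwitzEquiv E E') :
    HurwitzEquiv (F ++ E) (F' ++ E') := by
  have h1 : HurwitzEquiv (F ++ E) (F' ++ E) := by
    simpa using he_append_both [] E h
  have h2 : HurwitzEquiv (F' ++ E) (F' ++ E') := by
    simpa using he_append_both F' [] h'
  exact he_trans h1 h2

lemma he_cons (g : G) {F F' : List G} (h : HurwitzEquiv F F') :
    HurwitzEquiv (g :: F) (g :: F') := by
  simpa using he_append (he_refl [g]) h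

lemma hm_fconj {F F' : List G} (φ : G) (h : HurwitzMove F F') :
    HurwitzMove (fconj F φ) (fconj F' φ) := by
  obtain ⟨l₁, l₂, a, b, h1, h2⟩ := h
  refine ⟨fconj l₁ φ, fconj l₂ φ, φ⁻¹ * a * φ, φ⁻¹ * b * φ, ?_, ?_⟩
  · simp [h1, fconj]
  · simp [h2, fconj]
    group

lemma he_fconj {F F' : List G} (φ : G) (h : HurwitzEquiv F F') :
    HurwitzEquiv (fconj F φ) (fconj F' φ) := by
  induction h with
  | rel _ _ h => exact he_of_move (hm_fconj φ h)
  | refl _ => exact he_refl _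
  | symm _ _ _ ih => exact Relation.EqvGen.symm _ _ ih
  | trans _ _ _ _ _ ih1 ih2 => exact he_trans ih1 ih2

lemma he_step (a : G) (M : List G) : HurwitzEquiv (a :: fconj M a) (M ++ [a]) := by
  induction M with
  | nil => exact he_refl _
  | cons m M ih =>
    have hmv : HurwitzMove (a :: (a⁻¹ * m * a) :: fconj M a) (m :: a :: fconj M a) := by
      refine ⟨[], fconj M a, a, a⁻¹ * m * a, rfl, ?_⟩
      have : a * (a⁻¹ * m * a) * a⁻¹ = m := by group
      simp [this]
    exact he_trans (by simpa [fconj] using he_of_move hmv) (he_cons m ih)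

lemma main10 (a b c d e : G) :
    HurwitzEquiv
      [a, a, a⁻¹ * b * a, a⁻¹ * b * a,
       (b * a)⁻¹ * c * (b * a), (b * a)⁻¹ * c * (b * a),
       (c * b * a)⁻¹ * d * (c * b * a), (c * b * a)⁻¹ * d * (c * b * a),
       (d * c * b * a)⁻¹ * e * (d * c * b * a), (d * c * b * a)⁻¹ * e * (d * c * b * a)]
      [a, b, c, d, e, e, d, c, b, a] := by
  have k2 : HurwitzEquiv (d :: d :: fconj [e, e] d) [d, e, e, d] :=
    he_cons d (he_step d [e, e])
  have k3 : HurwitzEquiv (c :: c :: fconj (d :: d :: fconj [e, e] d) c) [c, d, e, e, d, c] :=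
    he_trans (he_cons c (he_cons c (he_fconj c k2))) (he_cons c (he_step c [d, e, e, d]))
  have k4 : HurwitzEquiv
      (b :: b :: fconj (c :: c :: fconj (d :: d :: fconj [e, e] d) c) b)
      [b, c, d, e, e, d, c, b] :=
    he_trans (he_cons b (he_cons b (he_fconj b k3))) (he_cons b (he_step b [c, d, e, e, d, c]))
  have k5 : HurwitzEquiv
      (a :: a :: fconj (b :: b :: fconj (c :: c :: fconj (d :: d :: fconj [e, e] d) c) b) a)
      [a, b, c, d, e, e, d, c, b, a] :=
    he_trans (he_cons a (he_cons a (he_fconj a k4)))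
      (he_cons a (he_step a [b, c, d, e, e, d, c, b]))
  have heq :
      [a, a, a⁻¹ * b * a, a⁻¹ * b * a,
       (b * a)⁻¹ * c * (b * a), (b * a)⁻¹ * c * (b * a),
       (c * b * a)⁻¹ * d * (c * b * a), (c * b * a)⁻¹ * d * (c * b * a),
       (d * c * b * a)⁻¹ * e * (d * c * b * a), (d * c * b * a)⁻¹ * e * (d * c * b * a)]
      = a :: a :: fconj (b :: b :: fconj (c :: c :: fconj (d :: d :: fconj [e, e] d) c) b) a := by
    simp only [fconj, List.map_cons, List.map_nil, List.cons.injEq, and_true]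
    and_intros <;> group
  rw [heq]
  exact k5

end Aux

/-- In `B₆(S²)`, the braid factorization
`((x₁)²·((x₂)_{x₁})²·((x₃)_{x₂x₁})²·((x₄)_{x₃x₂x₁})²·((x₅)_{x₄x₃x₂x₁})²)²`
is Hurwitz equivalent to `(x₁·x₂·x₃·x₄·x₅·x₅·x₄·x₃·x₂·x₁)²`. -/
theorem braid_factorization_B0 :
    HurwitzEquiv
      (fpow [x 0, x 0,
             bconj (x 1) (x 0), bconj (x 1) (x 0),
             bconj (x 2) (x 1 * x 0), bconj (x 2) (x 1 * x 0),
             bconj (x 3) (x 2 * x 1 * x 0), bconj (x 3) (x 2 * x 1 * x 0),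
             bconj (x 4) (x 3 * x 2 * x 1 * x 0), bconj (x 4) (x 3 * x 2 * x 1 * x 0)] 2)
      (fpow [x 0, x 1, x 2, x 3, x 4, x 4, x 3, x 2, x 1, x 0] 2) := by
  have h2 : ∀ (F : List SphereBraid₆), fpow F 2 = F ++ F := fun F => by simp [fpow]
  rw [h2, h2]
  simp only [bconj]
  exact he_append (main10 (x 0) (x 1) (x 2) (x 3) (x 4)) (main10 (x 0) (x 1) (x 2) (x 3) (x 4))
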